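/- arXiv:2507.03264 — 5 statements merged into one kernel-verified Lean document; each statement's English description precedes it below -/
import Mathlib

section
/- For any graph G, any vertex u of G, and any positive integer k, the Ramsey number satisfies r(G, K_{1,k}) ≤ r(G − u, K_{1,k}) + k, where G − u denotes G with vertex u and all incident edges removed. -/
open SimpleGraph Finset

/-- `F.ContainsCopy G` : the graph `F` contains a copy of `G` as a subgraph,
i.e. there is an injective map preserving adjacency. -/
def SimpleGraph.ContainsCopy {V W : Type*} (F : SimpleGraph V) (G : SimpleGraph W) : Prop :=
  ∃ f : W ↪ V, ∀ ⦃a b : W⦄, G.Adj a b → F.Adj (f a) (f b)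

/-- The Ramsey number `r(G,H)` : the least positive `N` such that in every red/blue
edge-colouring of `K_N` (the red graph being `R`, the blue graph `Rᶜ`) there is a
red copy of `G` or a blue copy of `H`. -/
noncomputable def ramseyNumber {V W : Type*} (G : SimpleGraph V) (H : SimpleGraph W) : ℕ :=
  sInf {N | 0 < N ∧ ∀ R : SimpleGraph (Fin N), R.ContainsCopy G ∨ Rᶜ.ContainsCopy H}

/-- The star `K_{1,k}`. -/
def starGraph (k : ℕ) : SimpleGraph (Fin 1 ⊕ Fin k) := completeBipartiteGraph (Fin 1) (Fin k)

/-- The independence number `α(G)`. -/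
noncomputable def indepNum {V : Type*} (G : SimpleGraph V) : ℕ :=
  sSup {m | ∃ s : Set V, (s.Pairwise fun a b => ¬ G.Adj a b) ∧ s.ncard = m}

/-- The vertex set of `G_v = G - N[v]` : the complement of the closed neighbourhood. -/
def SimpleGraph.delNbhd {V : Type*} (G : SimpleGraph V) (v : V) : Set V :=
  {w | w ≠ v ∧ ¬ G.Adj v w}

/-- `α'(G) = min over vertices v of α(G - N[v])`. -/
noncomputable def alphaPrime {V : Type*} (G : SimpleGraph V) : ℕ :=
  sInf {m | ∃ v : V, m = _root_.indepNum (G.induce (G.delNbhd v))}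

/-- `t` disjoint copies of the graph `G`. -/
def nCopies {V : Type*} (t : ℕ) (G : SimpleGraph V) : SimpleGraph (Fin t × V) where
  Adj a b := a.1 = b.1 ∧ G.Adj a.2 b.2
  symm := ⟨fun a b h => ⟨h.1.symm, h.2.symm⟩⟩
  loopless := ⟨fun a h => G.loopless.irrefl a.2 h.2⟩

/-!
Colour the edges of `K_{N+k}` red and blue, where `N = r(G - u, K_{1,k})`. A vertex of blue
degree at least `k` is the centre of a blue `K_{1,k}`. Otherwise every vertex `v` has red degree
at least `N`, so its red neighbourhood holds a red `G - u` or a blue `K_{1,k}`, and in the first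
case sending `u` to `v` completes a red `G`.

When no `N` works for `G - u`, so that `r(G - u, K_{1,k})` is the junk value `sInf ∅ = 0`, no `N`
works for `G` either and `r(G, K_{1,k}) = 0` as well.
-/

namespace SimpleGraph

variable {V W : Type*}

theorem containsCopy_iff_isContained {F : SimpleGraph V} {G : SimpleGraph W} :
    F.ContainsCopy G ↔ G ⊑ F := by
  rw [isContained_iff_exists_le_comap]
  rfl

theorem starGraph_isContained_of_le_degree {F : SimpleGraph V} {v : V} {k : ℕ}
    [Fintype (F.neighborSet v)] (h : k ≤ F.degree v) : _root_.starGraph k ⊑ F := by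
  obtain ⟨t, ht, htk⟩ := exists_subset_card_eq h
  refine ⟨Copy.completeBipartiteGraph {v} t (by simp) (by simpa using htk) ?_⟩
  intro a ha b hb
  rw [Finset.coe_singleton, Set.mem_singleton_iff] at ha
  exact ha ▸ (mem_neighborFinset F v b).1 (ht hb)

theorem isContained_of_isContained_induce_neighborSet {G : SimpleGraph V} {F : SimpleGraph W}
    {u : V} {v : W} (h : G.induce {w | w ≠ u} ⊑ F.induce (F.neighborSet v)) : G ⊑ F := by
  classical
  obtain ⟨f⟩ := h
  have hv : ∀ w (hw : w ≠ u), F.Adj v (f ⟨w, hw⟩) := fun w hw => (f ⟨w, hw⟩).2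
  let g : V → W := fun w => if hw : w = u then v else f ⟨w, hw⟩
  have hg_adj : ∀ ⦃a b⦄, G.Adj a b → F.Adj (g a) (g b) := by
    intro a b hab
    by_cases ha : a = u <;> by_cases hb : b = u
    · exact (G.loopless.irrefl u (by rwa [ha, hb] at hab)).elim
    · simpa [g, ha, hb] using hv b hb
    · simpa [g, ha, hb] using (hv a ha).symm
    · have hab' : (G.induce {w | w ≠ u}).Adj ⟨a, ha⟩ ⟨b, hb⟩ := hab
      simpa [g, ha, hb] using f.toHom.map_adj hab'
  have hg_inj : Function.Injective g := by
    intro a b hab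
    by_cases ha : a = u <;> by_cases hb : b = u
    · rw [ha, hb]
    · simp only [g, ha, hb, dite_true, dite_false] at hab
      exact absurd hab.symm (hv b hb).ne'
    · simp only [g, ha, hb, dite_true, dite_false] at hab
      exact absurd hab (hv a ha).ne'
    · simp only [g, ha, hb, dite_false] at hab
      exact congrArg Subtype.val (f.injective (Subtype.val_injective hab))
  exact ⟨⟨⟨g, fun hab => hg_adj hab⟩, hg_inj⟩⟩

end SimpleGraph

section Ramsey

variable {V W U : Type*}

def RamseyArrows (G : SimpleGraph V) (H : SimpleGraph W) (N : ℕ) : Prop :=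
  0 < N ∧ ∀ R : SimpleGraph (Fin N), G ⊑ R ∨ H ⊑ Rᶜ

variable {G : SimpleGraph V} {H : SimpleGraph W} {N : ℕ}

theorem ramseyNumber_eq_sInf_ramseyArrows :
    ramseyNumber G H = sInf {N | RamseyArrows G H N} := by
  simp only [ramseyNumber, RamseyArrows, containsCopy_iff_isContained]

theorem ramseyNumber_le_of_ramseyArrows (h : RamseyArrows G H N) : ramseyNumber G H ≤ N := by
  rw [ramseyNumber_eq_sInf_ramseyArrows]
  exact Nat.sInf_le h

theorem ramseyArrows_ramseyNumber (h : ∃ N, RamseyArrows G H N) :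
    RamseyArrows G H (ramseyNumber G H) := by
  rw [ramseyNumber_eq_sInf_ramseyArrows]
  exact Nat.sInf_mem h

theorem ramseyNumber_eq_zero_of_forall_not_ramseyArrows (h : ∀ N, ¬ RamseyArrows G H N) :
    ramseyNumber G H = 0 := by
  rw [ramseyNumber_eq_sInf_ramseyArrows, Nat.sInf_eq_zero]
  exact Or.inr (Set.eq_empty_of_forall_notMem h)

theorem RamseyArrows.mono_left {G' : SimpleGraph U} (h : RamseyArrows G H N) (hG : G' ⊑ G) :
    RamseyArrows G' H N :=
  ⟨h.1, fun R => (h.2 R).imp_left hG.trans⟩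

theorem RamseyArrows.isContained_or_of_embedding {F : SimpleGraph U} (h : RamseyArrows G H N)
    (e : Fin N ↪ U) : G ⊑ F ∨ H ⊑ Fᶜ :=
  (h.2 (F.comap e)).imp (·.trans (Embedding.comap e F).isContained)
    (·.trans (Embedding.complEquiv (Embedding.comap e F)).isContained)

theorem RamseyArrows.add_of_induce_ne {u : V} {k : ℕ}
    (h : RamseyArrows (G.induce {w | w ≠ u}) (_root_.starGraph k) N) :
    RamseyArrows G (_root_.starGraph k) (N + k) := by
  classical
  refine ⟨Nat.add_pos_left h.1 k, fun R => ?_⟩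
  by_cases hblue : ∃ v, k ≤ Rᶜ.degree v
  · obtain ⟨v, hv⟩ := hblue
    exact Or.inr (starGraph_isContained_of_le_degree hv)
  push Not at hblue
  let v : Fin (N + k) := ⟨0, Nat.add_pos_left h.1 k⟩
  have hred : N ≤ R.degree v := by
    have := hblue v
    rw [degree_compl, Fintype.card_fin] at this
    omega
  obtain ⟨e⟩ : Nonempty (Fin N ↪ R.neighborSet v) :=
    Function.Embedding.nonempty_of_card_le (by rwa [Fintype.card_fin, card_neighborSet_eq_degree])
  refine (h.isContained_or_of_embedding (F := R.induce (R.neighborSet v)) e).imp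
    isContained_of_isContained_induce_neighborSet (·.trans ?_)
  exact (Embedding.complEquiv (Embedding.induce (R.neighborSet v))).isContained

end Ramsey

theorem stmt0_general {V : Type*} (G : SimpleGraph V) (u : V) (k : ℕ) :
    ramseyNumber G (_root_.starGraph k) ≤
      ramseyNumber (G.induce {w | w ≠ u}) (_root_.starGraph k) + k := by
  by_cases h : ∃ N, RamseyArrows (G.induce {w | w ≠ u}) (_root_.starGraph k) N
  · exact ramseyNumber_le_of_ramseyArrows (ramseyArrows_ramseyNumber h).add_of_induce_ne
  · have hG : ∀ N, ¬ RamseyArrows G (_root_.starGraph k) N :=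
      fun N hN => h ⟨N, hN.mono_left (Copy.induce G _).isContained⟩
    rw [ramseyNumber_eq_zero_of_forall_not_ramseyArrows hG]
    exact Nat.zero_le _

/-- `r(G, K_{1,k}) ≤ r(G - u, K_{1,k}) + k`. -/
theorem stmt0 {V : Type*} [Fintype V] (G : SimpleGraph V) (u : V) (k : ℕ) (hk : 1 ≤ k) :
    ramseyNumber G (_root_.starGraph k) ≤
      ramseyNumber (G.induce {w | w ≠ u}) (_root_.starGraph k) + k :=
  stmt0_general G u k
end

section
/- For every unicyclic graph G on n vertices and every positive integer k, the Ramsey number satisfies r(G, K_{1,k}) ≤ n + 2k − 2. -/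
open SimpleGraph Finset

/-! A connected graph with as many edges as vertices is a spanning tree plus one edge. In a
forest every nonempty finite vertex set `S` has a vertex with at most one neighbour in `S` (an end
of a longest path inside `S`), so `G` is `2`-degenerate. If the red graph `R` on
`N = n + 2k - 2` vertices has no blue `K_{1,k}`, every vertex has blue degree at most `k - 1`,
and `G` embeds greedily into `R`: peel off vertices of degree at most `2`, embed the rest, and
place the peeled vertex outside the at most `n - 1` used targets and the at most `2(k - 1)` blue
neighbours of the images of its neighbours. -/

namespace SimpleGraph

variable {V W : Type*}

open Classical in
def IsDegenerate (G : SimpleGraph V) (d : ℕ) : Prop :=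
  ∀ S : Finset V, S.Nonempty → ∃ x ∈ S, #{y ∈ S | G.Adj x y} ≤ d

theorem IsAcyclic.exists_isPath_cons {T : SimpleGraph V} (hT : T.IsAcyclic) {S : Finset V}
    {u v : V} {p : T.Walk u v} (hp : p.IsPath) [DecidablePred (T.Adj u)]
    (hu : 1 < #{y ∈ S | T.Adj u y}) : ∃ w ∈ S, ∃ h : T.Adj w u, (Walk.cons h p).IsPath := by
  obtain ⟨w, hw, hw_ne⟩ := exists_mem_ne hu p.snd
  rw [mem_filter] at hw
  refine ⟨w, hw.1, hw.2.symm, (Walk.cons_isPath_iff _ _).2 ⟨hp, fun hwp => ?_⟩⟩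
  exact hw_ne (hT.eq_snd_of_adj_start hp hw.2 hwp)

theorem IsAcyclic.isDegenerate_one {T : SimpleGraph V} (hT : T.IsAcyclic) : T.IsDegenerate 1 := by
  classical
  intro S hS
  by_contra! hS_deg
  have long_path : ∀ m : ℕ, ∃ (u v : V) (p : T.Walk u v),
      p.IsPath ∧ p.support.toFinset ⊆ S ∧ m ≤ p.length := by
    intro m
    induction m with
    | zero =>
      obtain ⟨x, hx⟩ := hS
      exact ⟨x, x, .nil, .nil, by simpa using hx, le_rfl⟩
    | succ m ih =>
      obtain ⟨u, v, p, hp, hpS, hlen⟩ := ih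
      have hu : u ∈ S := hpS (by simp)
      obtain ⟨w, hw, _, hwp⟩ := hT.exists_isPath_cons hp (hS_deg u hu)
      refine ⟨w, v, _, hwp, ?_, by simpa using hlen⟩
      simpa [insert_subset_iff] using ⟨hw, hpS⟩
  obtain ⟨u, v, p, hp, hpS, hlen⟩ := long_path #S
  have := card_le_card hpS
  rw [List.toFinset_card_of_nodup hp.support_nodup, Walk.length_support] at this
  omega

theorem IsDegenerate.add_ncard_edgeSet_sdiff [Finite V] {T G : SimpleGraph V} {d : ℕ}
    (hT : T.IsDegenerate d) : G.IsDegenerate (d + (G.edgeSet \ T.edgeSet).ncard) := by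
  classical
  intro S hS
  obtain ⟨x, hx, hx_deg⟩ := hT S hS
  refine ⟨x, hx, ?_⟩
  have h_extra : #{y ∈ S | G.Adj x y ∧ ¬ T.Adj x y} ≤ (G.edgeSet \ T.edgeSet).ncard := by
    rw [← Set.ncard_coe_finset]
    refine Set.ncard_le_ncard_of_injOn (fun y => s(x, y)) (fun y hy => ?_)
      (fun _ _ _ _ h => Sym2.congr_right.mp h) (Set.toFinite _)
    simp only [coe_filter, Set.mem_ofPred_eq] at hy
    exact ⟨hy.2.1, hy.2.2⟩
  calc #{y ∈ S | G.Adj x y}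
      ≤ #({y ∈ S | T.Adj x y} ∪ {y ∈ S | G.Adj x y ∧ ¬ T.Adj x y}) := by
        refine card_le_card fun y hy => ?_
        by_cases hT : T.Adj x y <;> simp_all
    _ ≤ #{y ∈ S | T.Adj x y} + #{y ∈ S | G.Adj x y ∧ ¬ T.Adj x y} := card_union_le _ _
    _ ≤ d + (G.edgeSet \ T.edgeSet).ncard := add_le_add hx_deg h_extra

theorem isDegenerate_two_of_connected_of_ncard_edgeSet_eq [Finite V] {G : SimpleGraph V}
    (hconn : G.Connected) (he : G.edgeSet.ncard = Nat.card V) : G.IsDegenerate 2 := by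
  obtain ⟨T, hTG, hT⟩ := hconn.exists_isTree_le
  have hT_card : T.edgeSet.ncard + 1 = Nat.card V := by
    rw [← Nat.card_coe_set_eq]; exact (isTree_iff_connected_and_card.mp hT).2
  have h_extra : (G.edgeSet \ T.edgeSet).ncard = 1 := by
    rw [Set.ncard_sdiff (edgeSet_mono hTG)]; omega
  simpa [h_extra] using hT.isAcyclic.isDegenerate_one.add_ncard_edgeSet_sdiff (G := G)

def IsCopyOn (G : SimpleGraph V) (R : SimpleGraph W) (S : Set V) (f : V → W) : Prop :=
  Set.InjOn f S ∧ ∀ ⦃a⦄, a ∈ S → ∀ ⦃b⦄, b ∈ S → G.Adj a b → R.Adj (f a) (f b)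

theorem IsCopyOn.update_insert [DecidableEq V] {G : SimpleGraph V} {R : SimpleGraph W}
    {S : Set V} {f : V → W} (hf : G.IsCopyOn R S f) {x : V} (hx : x ∉ S) {z : W}
    (hz : z ∉ f '' S) (hz_adj : ∀ y ∈ S, G.Adj x y → R.Adj z (f y)) :
    G.IsCopyOn R (insert x S) (Function.update f x z) := by
  have h_eq : Set.EqOn f (Function.update f x z) S := fun y hy =>
    (Function.update_of_ne (ne_of_mem_of_not_mem hy hx) z f).symm
  refine ⟨(Set.injOn_insert hx).2
    ⟨hf.1.congr h_eq, by rwa [Function.update_self, ← h_eq.image_eq]⟩, ?_⟩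
  rintro a (rfl | ha) b (rfl | hb) hab
  · exact absurd hab (G.loopless.irrefl _)
  · rw [Function.update_self, ← h_eq hb]
    exact hz_adj b hb hab
  · rw [Function.update_self, ← h_eq ha]
    exact (hz_adj a ha hab.symm).symm
  · rw [← h_eq ha, ← h_eq hb]
    exact hf.2 ha hb hab

theorem IsCopyOn.containsCopy {G : SimpleGraph V} {R : SimpleGraph W} {f : V → W}
    (hf : G.IsCopyOn R Set.univ f) : R.ContainsCopy G :=
  ⟨⟨f, Set.injOn_univ.1 hf.1⟩, fun _ _ hab => hf.2 trivial trivial hab⟩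

theorem exists_notMem_forall_adj [Fintype W] (R : SimpleGraph W) {D : ℕ}
    (hD : ∀ v, (Rᶜ.neighborSet v).ncard ≤ D) {A B : Finset W} (hBA : B ⊆ A)
    (h : #A + #B * D < Fintype.card W) : ∃ z ∉ A, ∀ b ∈ B, R.Adj z b := by
  classical
  let X := A ∪ B.biUnion fun b => (Rᶜ.neighborSet b).toFinset
  have hX : #X < Fintype.card W := by
    refine lt_of_le_of_lt ((card_union_le _ _).trans (add_le_add_right ?_ _)) h
    refine card_biUnion_le.trans (sum_le_card_nsmul _ _ _ fun b _ => ?_)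
    rw [← Set.ncard_eq_toFinset_card']
    exact hD b
  obtain ⟨z, hz⟩ : ∃ z, z ∉ X := by
    by_contra! hall
    exact hX.not_ge (card_le_card fun z _ => hall z) |>.elim
  simp only [X, mem_union, mem_biUnion, Set.mem_toFinset, mem_neighborSet, compl_adj,
    not_or, not_exists, not_and, not_not] at hz
  refine ⟨z, hz.1, fun b hb => (hz.2 b hb (fun h => hz.1 (h ▸ hBA hb))).symm⟩

theorem IsDegenerate.exists_isCopyOn [Fintype W] [Nonempty W] {G : SimpleGraph V} {d : ℕ}
    (hG : G.IsDegenerate d) (R : SimpleGraph W) {D : ℕ} (hD : ∀ v, (Rᶜ.neighborSet v).ncard ≤ D)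
    (S : Finset V) (hS : #S + d * D ≤ Fintype.card W) : ∃ f : V → W, G.IsCopyOn R S f := by
  classical
  induction S using Finset.strongInduction with
  | H S ih =>
  rcases S.eq_empty_or_nonempty with rfl | hS_ne
  · exact ⟨fun _ => Classical.arbitrary W, by simp [IsCopyOn]⟩
  obtain ⟨x, hx, hx_deg⟩ := hG S hS_ne
  have h_erase : #(S.erase x) + 1 = #S := card_erase_add_one hx
  obtain ⟨f, hf⟩ := ih (S.erase x) (erase_ssubset hx) (by omega)
  have h_nbrs : {y ∈ S | G.Adj x y}.image f ⊆ (S.erase x).image f :=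
    image_subset_image fun y hy => by
      rw [mem_filter] at hy
      exact mem_erase.2 ⟨hy.2.ne', hy.1⟩
  have h_count : #((S.erase x).image f) + #({y ∈ S | G.Adj x y}.image f) * D
      < Fintype.card W :=
    calc #((S.erase x).image f) + #({y ∈ S | G.Adj x y}.image f) * D
        ≤ #(S.erase x) + d * D := add_le_add card_image_le
          (Nat.mul_le_mul_right _ (card_image_le.trans hx_deg))
      _ < Fintype.card W := by omega
  obtain ⟨z, hz, hz_adj⟩ := exists_notMem_forall_adj R hD h_nbrs h_count
  have hf' := hf.update_insert (by simp) (by rwa [← coe_image, mem_coe]) fun y hy hxy =>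
    hz_adj _ (mem_image_of_mem _ (mem_filter.2 ⟨(mem_erase.1 hy).2, hxy⟩))
  rw [coe_erase, Set.insert_sdiff_singleton, Set.insert_eq_of_mem (mem_coe.2 hx)] at hf'
  exact ⟨_, hf'⟩

theorem containsCopy_starGraph_of_le_ncard_neighborSet [Finite W]
    {B : SimpleGraph W} {v : W} {k : ℕ} (h : k ≤ (B.neighborSet v).ncard) :
    B.ContainsCopy (_root_.starGraph k) := by
  classical
  have := Fintype.ofFinite W
  obtain ⟨g⟩ : Nonempty (Fin k ↪ B.neighborSet v) :=
    Function.Embedding.nonempty_of_card_le <| by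
      simpa [← Nat.card_eq_fintype_card, Nat.card_fin] using h
  have hg : ∀ i, B.Adj v (g i) := fun i => (g i).2
  refine ⟨⟨Sum.elim (fun _ => v) (Subtype.val ∘ g), ?_⟩, ?_⟩
  · exact Function.Injective.sumElim (Function.injective_of_subsingleton _)
      (Subtype.val_injective.comp g.injective) fun _ i => (hg i).ne
  · rintro (a | a) (b | b) hab <;> simp_all [_root_.starGraph]
    exact (hg a).symm

end SimpleGraph

/-- for a unicyclic graph `G` (connected, with `n` vertices and `n` edges),
`r(G, K_{1,k}) ≤ n + 2k - 2`. -/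
theorem stmt2 {V : Type*} [Fintype V] (G : SimpleGraph V) (n k : ℕ) (hk : 1 ≤ k)
    (hcard : Fintype.card V = n) (hconn : G.Connected) (he : G.edgeSet.ncard = n) :
    ramseyNumber G (_root_.starGraph k) ≤ n + 2 * k - 2 := by
  have hn : 1 ≤ n := hcard ▸ @Fintype.card_pos _ _ hconn.nonempty
  have hG : G.IsDegenerate 2 := isDegenerate_two_of_connected_of_ncard_edgeSet_eq hconn <| by
    rw [he, Nat.card_eq_fintype_card, hcard]
  refine Nat.sInf_le ⟨by omega, fun R => or_iff_not_imp_right.2 fun h_star => ?_⟩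
  have hD : ∀ v, (Rᶜ.neighborSet v).ncard ≤ k - 1 := fun v => by
    by_contra! hv
    exact h_star (containsCopy_starGraph_of_le_ncard_neighborSet (v := v) (by omega))
  have : Nonempty (Fin (n + 2 * k - 2)) := ⟨⟨0, by omega⟩⟩
  obtain ⟨f, hf⟩ := hG.exists_isCopyOn R hD univ <| by
    rw [card_univ, hcard, Fintype.card_fin]; omega
  exact (coe_univ (α := V) ▸ hf).containsCopy
end

section
/- Let n and k be positive integers with n ≥ 2k + 1. If G is a connected graph with n vertices and at most n(1 + 1/(2k+1)) edges, then G contains at least k vertices of degree at most 2. -/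
/-!
Connectivity on at least two vertices makes every degree positive. Counting a vertex of degree
at most 2 as 1 and every other vertex as 3 in the handshake identity gives
`3n ≤ 2e + 2a`, where `a` is the number of vertices of degree at most 2. Since
`(2k+1)e ≤ (2k+2)n`, this yields `(2k+1)·2a ≥ (2k-1)n ≥ (2k-1)(2k+1)`, hence `a > k - 1`.
-/

open SimpleGraph Finset

namespace SimpleGraph

variable {V : Type*} [Fintype V] (G : SimpleGraph V) [DecidableRel G.Adj]

lemma ncard_neighborSet_eq_degree (v : V) : (G.neighborSet v).ncard = G.degree v := by
  rw [Set.ncard_eq_toFinset_card', Set.toFinset_card, card_neighborSet_eq_degree]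

lemma ncard_edgeSet_eq_card_edgeFinset : G.edgeSet.ncard = #G.edgeFinset := by
  rw [Set.ncard_eq_toFinset_card', edgeFinset]

lemma three_mul_card_le_two_mul_card_edgeFinset_add (hmin : ∀ v, 1 ≤ G.degree v) :
    3 * Fintype.card V ≤ 2 * #G.edgeFinset + 2 * #{v | G.degree v ≤ 2} := by
  calc 3 * Fintype.card V = ∑ _v : V, 3 := by simp [mul_comm]
    _ ≤ ∑ v : V, (G.degree v + if G.degree v ≤ 2 then 2 else 0) := by
        gcongr with v
        have := hmin v
        split_ifs <;> omega
    _ = 2 * #G.edgeFinset + 2 * #{v | G.degree v ≤ 2} := by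
        rw [sum_add_distrib, sum_degrees_eq_twice_card_edges, sum_ite, sum_const_zero,
          sum_const, smul_eq_mul, add_zero]
        ring

end SimpleGraph

lemma le_of_three_mul_le_two_mul_add {n k e a : ℕ} (hn : 2 * k + 1 ≤ n)
    (hdeg : 3 * n ≤ 2 * e + 2 * a)
    (he : (2 * k + 1) * e ≤ (2 * k + 2) * n) : k ≤ a := by
  by_contra! ha
  nlinarith

lemma mul_le_mul_of_cast_le_mul_one_add_one_div {n k e : ℕ}
    (he : (e : ℚ) ≤ (n : ℚ) * (1 + 1 / (2 * (k : ℚ) + 1))) :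
    (2 * k + 1) * e ≤ (2 * k + 2) * n := by
  have hpos : (0 : ℚ) < 2 * k + 1 := by positivity
  rw [mul_one_add, mul_one_div, ← sub_le_iff_le_add', le_div_iff₀ hpos] at he
  exact_mod_cast (by linarith : ((2 * k + 1) * e : ℚ) ≤ (2 * k + 2) * n)

/-- a connected graph on `n ≥ 2k+1` vertices with at most `n(1 + 1/(2k+1))`
edges has at least `k` vertices of degree at most 2. -/
theorem stmt3 {V : Type*} [Fintype V] (G : SimpleGraph V) (n k : ℕ) (hk : 1 ≤ k)
    (hn : 2 * k + 1 ≤ n) (hcard : Fintype.card V = n) (hconn : G.Connected)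
    (he : (G.edgeSet.ncard : ℚ) ≤ (n : ℚ) * (1 + 1 / (2 * (k : ℚ) + 1))) :
    k ≤ {v : V | (G.neighborSet v).ncard ≤ 2}.ncard := by
  classical
  have : Nontrivial V := Fintype.one_lt_card_iff_nontrivial.mp (by omega)
  have hcount := G.three_mul_card_le_two_mul_card_edgeFinset_add
    fun v ↦ hconn.preconnected.degree_pos_of_nontrivial v
  rw [G.ncard_edgeSet_eq_card_edgeFinset] at he
  have hlow :
      {v : V | (G.neighborSet v).ncard ≤ 2} = ↑({v | G.degree v ≤ 2} : Finset V) := by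
    ext v; simp [G.ncard_neighborSet_eq_degree]
  rw [hlow, Set.ncard_coe_finset]
  exact le_of_three_mul_le_two_mul_add hn (hcard ▸ hcount)
    (mul_le_mul_of_cast_le_mul_one_add_one_div he)
end

section
/- Consider the complete bipartite graph K_{a,b} with a ≤ b, with parts X of size a and Y of size b, whose edges are colored red and blue. Then either there exists a red matching of size a, or for some 0 ≤ c ≤ a − 1 there exists a blue complete bipartite subgraph K_{c+1, b−c} whose part of size c+1 lies in X. -/
open SimpleGraph Finset

/-!
By Hall's theorem, if there is no red matching saturating `X`, some nonempty `S ⊆ X` has a red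
neighbourhood of size at most `|S| - 1`; then `S` and the rest of `Y` span a blue
`K_{|S|, b - (|S| - 1)}`.
-/

theorem Finset.exists_embedding_forall_mem_or_card_biUnion_lt {ι α : Type*} [DecidableEq α]
    (t : ι → Finset α) :
    (∃ f : ι ↪ α, ∀ i, f i ∈ t i) ∨ ∃ s : Finset ι, #(s.biUnion t) < #s := by
  by_cases hall : ∀ s : Finset ι, #s ≤ #(s.biUnion t)
  · obtain ⟨f, hf, hmem⟩ := (all_card_le_biUnion_card_iff_exists_injective t).mp hall
    exact .inl ⟨⟨f, hf⟩, hmem⟩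
  · push Not at hall
    exact .inr hall

theorem Finset.exists_card_eq_forall_notMem_of_card_biUnion_lt {ι α : Type*} [Fintype α]
    [DecidableEq α] (t : ι → Finset α) {s : Finset ι} (hs : #(s.biUnion t) < #s) :
    ∃ T : Finset α, #T = Fintype.card α - (#s - 1) ∧ ∀ i ∈ s, ∀ j ∈ T, j ∉ t i := by
  have hcard : Fintype.card α - (#s - 1) ≤ #(univ \ s.biUnion t) := by
    rw [card_sdiff_of_subset (subset_univ _), card_univ]
    omega
  obtain ⟨T, hTsub, hTcard⟩ := exists_subset_card_eq hcard
  exact ⟨T, hTcard, fun i hi j hj hji => (mem_sdiff.mp (hTsub hj)).2 (mem_biUnion.mpr ⟨i, hi, hji⟩)⟩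

theorem stmt5_general (a b : ℕ) (red : Fin a → Fin b → Prop) :
    (∃ f : Fin a ↪ Fin b, ∀ i : Fin a, red i (f i)) ∨
    (∃ c : ℕ, c ≤ a - 1 ∧ ∃ S : Finset (Fin a), ∃ T : Finset (Fin b),
      S.card = c + 1 ∧ T.card = b - c ∧ ∀ i ∈ S, ∀ j ∈ T, ¬ red i j) := by
  classical
  obtain ⟨f, hf⟩ | ⟨S, hS⟩ :=
    exists_embedding_forall_mem_or_card_biUnion_lt fun i => univ.filter (red i)
  · exact .inl ⟨f, fun i => (mem_filter.mp (hf i)).2⟩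
  · obtain ⟨T, hT, hST⟩ := exists_card_eq_forall_notMem_of_card_biUnion_lt _ hS
    have hSa : #S ≤ a := by simpa using S.card_le_univ
    refine .inr ⟨#S - 1, by omega, S, T, by omega, by simpa using hT, fun i hi j hj hred => ?_⟩
    exact hST i hi j hj (mem_filter.mpr ⟨mem_univ j, hred⟩)

/-- in any red/blue colouring of `K_{a,b}` with `a ≤ b`, either there is a
red matching of size `a`, or for some `0 ≤ c ≤ a - 1` there is a blue `K_{c+1, b-c}`
with the part of size `c+1` inside `X`. -/
theorem stmt5 (a b : ℕ) (hab : a ≤ b) (red : Fin a → Fin b → Prop) :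
    (∃ f : Fin a ↪ Fin b, ∀ i : Fin a, red i (f i)) ∨
    (∃ c : ℕ, c ≤ a - 1 ∧ ∃ S : Finset (Fin a), ∃ T : Finset (Fin b),
      S.card = c + 1 ∧ T.card = b - c ∧ ∀ i ∈ S, ∀ j ∈ T, ¬ red i j) :=
  stmt5_general a b red
end

section
/- Let G be a connected graph with n vertices and at most n(1 + 1/(24k−12)) edges, where k ≥ 1 and n ≥ 120k^2 − 180k + 60. If the maximum degree satisfies Δ(G) < n(1 − 1/(24k−12)), then α'(G) ≥ k − 1. -/
/-!
Fix a vertex `v` of degree `d` and let `S` be the `m = n - d - 1` vertices outside `N[v]`.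
The degree bound gives `m + 1 > n / (24k - 12) ≥ 5(k - 1)`, and then the edge bound gives
`e(G) ≤ n + m = d + 1 + 2m`. Since `G` is connected, some edge joins `S` to `N(v)`; together with
the `d` edges at `v` and the `e(G_v)` edges inside `S` this gives `e(G) ≥ d + e(G_v) + 1`, hence
`e(G_v) ≤ 2m`. Caro–Wei now yields `α(G_v) ≥ m² / (m + 2e(G_v)) ≥ m / 5 ≥ k - 1`.
-/

open SimpleGraph Finset

namespace SimpleGraph

variable {V : Type*} (G : SimpleGraph V) [DecidableRel G.Adj]

def degreeIn (s : Finset V) (w : V) : ℕ := #{x ∈ s | G.Adj w x}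

def closedNeighborFinset [Fintype V] [DecidableEq V] (v : V) : Finset V :=
  insert v (G.neighborFinset v)

variable {G}

theorem degreeIn_mono {s s' : Finset V} (h : s' ⊆ s) (w : V) :
    G.degreeIn s' w ≤ G.degreeIn s w :=
  card_le_card (filter_subset_filter _ h)

theorem sum_one_div_degreeIn_closedNbhd_le_one [DecidableEq V] {s : Finset V} {u : V} (hu : u ∈ s)
    (hmin : ∀ w ∈ s, G.degreeIn s u ≤ G.degreeIn s w) :
    ∑ w ∈ insert u {x ∈ s | G.Adj u x}, (1 : ℝ) / (G.degreeIn s w + 1) ≤ 1 := by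
  have hcard : (#(insert u {x ∈ s | G.Adj u x}) : ℝ) = G.degreeIn s u + 1 := by
    rw [card_insert_of_notMem (by simp), degreeIn]
    push_cast; ring
  have hsub : insert u {x ∈ s | G.Adj u x} ⊆ s := insert_subset hu (filter_subset _ _)
  calc ∑ w ∈ insert u {x ∈ s | G.Adj u x}, (1 : ℝ) / (G.degreeIn s w + 1)
      ≤ ∑ _w ∈ insert u {x ∈ s | G.Adj u x}, (1 : ℝ) / (G.degreeIn s u + 1) :=
        sum_le_sum fun w hw ↦ one_div_le_one_div_of_le (by positivity)
          (by exact_mod_cast Nat.add_le_add_right (hmin w (hsub hw)) 1)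
    _ = 1 := by rw [sum_const, nsmul_eq_mul, hcard]; field_simp

theorem exists_isIndepSet_sum_one_div_degreeIn_le [DecidableEq V] (s : Finset V) :
    ∃ t ⊆ s, G.IsIndepSet t ∧ ∑ w ∈ s, (1 : ℝ) / (G.degreeIn s w + 1) ≤ #t := by
  induction s using Finset.strongInduction with
  | _ s ih =>
  obtain rfl | hne := s.eq_empty_or_nonempty
  · exact ⟨∅, by simp⟩
  -- take a vertex of minimum degree and delete its closed neighbourhood
  obtain ⟨u, hu, hmin⟩ := exists_min_image s (G.degreeIn s) hne
  set N := insert u {x ∈ s | G.Adj u x}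
  have hN : N ⊆ s := insert_subset hu (filter_subset _ _)
  obtain ⟨t, hts, ht, hsum⟩ := ih (s \ N) (sdiff_ssubset hN (insert_nonempty _ _))
  have hu_nadj : ∀ b ∈ t, ¬ G.Adj u b := fun b hb hub ↦
    (mem_sdiff.1 (hts hb)).2 (mem_insert_of_mem (mem_filter.2 ⟨(mem_sdiff.1 (hts hb)).1, hub⟩))
  have hut : u ∉ t := fun h ↦ (mem_sdiff.1 (hts h)).2 (mem_insert_self _ _)
  refine ⟨insert u t, insert_subset hu (hts.trans sdiff_subset), ?_, ?_⟩
  · rw [coe_insert]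
    exact ht.insert fun b hb _ ↦ ⟨hu_nadj b hb, fun h ↦ hu_nadj b hb h.symm⟩
  · have hrest : ∑ w ∈ s \ N, (1 : ℝ) / (G.degreeIn s w + 1)
        ≤ ∑ w ∈ s \ N, (1 : ℝ) / (G.degreeIn (s \ N) w + 1) :=
      sum_le_sum fun w _ ↦ one_div_le_one_div_of_le (by positivity)
        (by exact_mod_cast Nat.add_le_add_right (degreeIn_mono sdiff_subset w) 1)
    rw [← sum_sdiff hN, card_insert_of_notMem hut]
    push_cast
    linarith [sum_one_div_degreeIn_closedNbhd_le_one hu hmin]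

-- Caro–Wei in its averaged form `α ≥ m / (1 + d̄)`, by Sedrakyan's inequality.
theorem exists_isIndepSet_sq_card_le [DecidableEq V] (s : Finset V) :
    ∃ t ⊆ s, G.IsIndepSet t ∧ #s ^ 2 ≤ #t * ∑ w ∈ s, (G.degreeIn s w + 1) := by
  obtain rfl | hne := s.eq_empty_or_nonempty
  · exact ⟨∅, by simp⟩
  obtain ⟨t, hts, ht, hsum⟩ := G.exists_isIndepSet_sum_one_div_degreeIn_le s
  refine ⟨t, hts, ht, ?_⟩
  have hpos : ∀ w ∈ s, (0 : ℝ) < G.degreeIn s w + 1 := fun _ _ ↦ by positivity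
  have hsedrakyan := sq_sum_div_le_sum_sq_div s (fun _ ↦ (1 : ℝ)) hpos
  simp only [sum_const, nsmul_eq_mul, mul_one, one_pow] at hsedrakyan
  rw [div_le_iff₀ (sum_pos hpos hne)] at hsedrakyan
  have : ((#s : ℕ) : ℝ) ^ 2 ≤ #t * ∑ w ∈ s, ((G.degreeIn s w : ℝ) + 1) :=
    hsedrakyan.trans (mul_le_mul_of_nonneg_right hsum (sum_nonneg fun w hw ↦ (hpos w hw).le))
  exact_mod_cast this

theorem Preconnected.exists_adj_of_mem_delNbhd {G : SimpleGraph V} (hG : G.Preconnected)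
    {u v : V} (hu : u ∈ G.delNbhd v) : ∃ w ∈ G.delNbhd v, ∃ x, G.Adj v x ∧ G.Adj w x := by
  obtain ⟨p⟩ := hG u v
  obtain ⟨d, -, hd, hd'⟩ := p.exists_boundary_dart _ hu fun h ↦ h.1 rfl
  refine ⟨d.fst, hd, d.snd, ?_, d.adj⟩
  by_contra hvx
  exact hd' ⟨fun h ↦ hd.2 (h ▸ d.adj.symm), hvx⟩

section Degrees

variable [Fintype V]

theorem degreeIn_le_degree (s : Finset V) (w : V) : G.degreeIn s w ≤ G.degree w := by
  rw [← card_neighborFinset_eq_degree]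
  exact card_le_card fun x hx ↦ (mem_neighborFinset _ _ _).2 (mem_filter.1 hx).2

theorem degreeIn_lt_degree {s : Finset V} {w x : V} (hwx : G.Adj w x) (hx : x ∉ s) :
    G.degreeIn s w < G.degree w := by
  rw [← card_neighborFinset_eq_degree]
  refine card_lt_card ⟨fun y hy ↦ (mem_neighborFinset _ _ _).2 (mem_filter.1 hy).2,
    fun h ↦ hx (mem_filter.1 (h ((mem_neighborFinset _ _ _).2 hwx))).1⟩

theorem sum_degreeIn_lt_sum_degree {s t : Finset V} {w x : V} (hw : w ∈ t) (hwx : G.Adj w x)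
    (hx : x ∉ s) : ∑ z ∈ t, G.degreeIn s z < ∑ z ∈ t, G.degree z :=
  sum_lt_sum (fun z _ ↦ degreeIn_le_degree s z) ⟨w, hw, degreeIn_lt_degree hwx hx⟩

variable [DecidableEq V]

theorem card_closedNeighborFinset (v : V) : #(G.closedNeighborFinset v) = G.degree v + 1 := by
  rw [closedNeighborFinset, card_insert_of_notMem (notMem_neighborFinset_self G v),
    card_neighborFinset_eq_degree]

theorem mem_compl_closedNeighborFinset {v w : V} :
    w ∈ (G.closedNeighborFinset v)ᶜ ↔ w ∈ G.delNbhd v := by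
  simp [closedNeighborFinset, delNbhd, eq_comm]

theorem sum_degreeIn_compl_closedNeighborFinset_add_le (hG : G.Preconnected) {v : V}
    (hS : ((G.closedNeighborFinset v)ᶜ).Nonempty) :
    ∑ w ∈ (G.closedNeighborFinset v)ᶜ, G.degreeIn (G.closedNeighborFinset v)ᶜ w
      + 2 * G.degree v + 2 ≤ 2 * #G.edgeFinset := by
  set S := (G.closedNeighborFinset v)ᶜ
  obtain ⟨u, hu⟩ := hS
  obtain ⟨w, hw, x, hvx, hwx⟩ :=
    hG.exists_adj_of_mem_delNbhd (mem_compl_closedNeighborFinset.1 hu)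
  have hxS : x ∉ S := fun h ↦ (mem_compl_closedNeighborFinset.1 h).2 hvx
  -- the edge `wx` from `S` to `N(v)` makes both degree sums strictly larger
  have hS_lt := sum_degreeIn_lt_sum_degree (s := S) (t := S)
    (mem_compl_closedNeighborFinset.2 hw) hwx hxS
  have hN_lt := sum_degreeIn_lt_sum_degree (s := {v}) ((mem_neighborFinset _ _ _).2 hvx)
    hwx.symm (by simpa using hw.1)
  have hN_deg : ∑ z ∈ G.neighborFinset v, G.degreeIn {v} z = G.degree v := by
    rw [sum_congr rfl fun z hz ↦ ?_, sum_const, smul_eq_mul, mul_one,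
      card_neighborFinset_eq_degree]
    rw [degreeIn, filter_singleton, if_pos ((mem_neighborFinset _ _ _).1 hz).symm, card_singleton]
  have hsplit : ∑ z ∈ G.closedNeighborFinset v, G.degree z + ∑ z ∈ S, G.degree z
      = 2 * #G.edgeFinset := by
    rw [sum_add_sum_compl, sum_degrees_eq_twice_card_edges]
  rw [closedNeighborFinset, sum_insert (notMem_neighborFinset_self G v)] at hsplit
  omega

end Degrees

theorem card_le_indepNum_induce {G : SimpleGraph V} [Finite V] {s : Set V} {t : Finset V}
    (hts : ↑t ⊆ s) (ht : G.IsIndepSet t) : #t ≤ _root_.indepNum (G.induce s) := by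
  refine le_csSup ⟨Nat.card s, ?_⟩ ⟨Subtype.val ⁻¹' t, ?_, ?_⟩
  · rintro _ ⟨u, -, rfl⟩
    exact Set.ncard_le_card u
  · exact fun a ha b hb hab ↦ ht ha hb (Subtype.val_injective.ne hab)
  · rw [Set.ncard_preimage_of_injective_subset_range Subtype.val_injective (by simpa using hts),
      Set.ncard_coe_finset]

theorem card_compl_closedNeighborFinset_le_five_mul_indepNum [Fintype V] [DecidableEq V]
    (hG : G.Preconnected) (v : V)
    (he : #G.edgeFinset ≤ Fintype.card V + #(G.closedNeighborFinset v)ᶜ) :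
    #(G.closedNeighborFinset v)ᶜ ≤ 5 * _root_.indepNum (G.induce (G.delNbhd v)) := by
  obtain hS | hS := ((G.closedNeighborFinset v)ᶜ).eq_empty_or_nonempty
  · simp [hS]
  have hcount := sum_degreeIn_compl_closedNeighborFinset_add_le hG hS
  set S := (G.closedNeighborFinset v)ᶜ
  have hcard : Fintype.card V = G.degree v + 1 + #S := by
    rw [← card_closedNeighborFinset, card_add_card_compl]
  obtain ⟨t, hts, ht, hcw⟩ := G.exists_isIndepSet_sq_card_le S
  have hα : #t ≤ _root_.indepNum (G.induce (G.delNbhd v)) :=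
    card_le_indepNum_induce (fun x hx ↦ mem_compl_closedNeighborFinset.1 (hts hx)) ht
  have hsum : ∑ w ∈ S, (G.degreeIn S w + 1) ≤ 5 * #S := by
    rw [sum_add_distrib, sum_const, smul_eq_mul, mul_one]
    omega
  have : #S * #S ≤ 5 * #t * #S := by
    calc #S * #S = #S ^ 2 := (sq _).symm
      _ ≤ #t * (5 * #S) := hcw.trans (Nat.mul_le_mul_left _ hsum)
      _ = 5 * #t * #S := by ring
  have := Nat.le_of_mul_le_mul_right this hS.card_pos
  omega

end SimpleGraph

theorem five_mul_le_and_le_add_of_degree_bounds {n k d m e : ℕ} (hk : 1 ≤ k)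
    (hn : 120 * k ^ 2 + 60 ≤ n + 180 * k) (hnd : d + 1 + m = n)
    (hd : (d : ℚ) < n * (1 - 1 / (24 * k - 12)))
    (he : (e : ℚ) ≤ n * (1 + 1 / (24 * k - 12))) :
    5 * k ≤ m + 5 ∧ e ≤ n + m := by
  have hc : (0 : ℚ) < 24 * k - 12 := by
    have : (1 : ℚ) ≤ k := by exact_mod_cast hk
    linarith
  have hnd' : (n : ℚ) = d + 1 + m := by exact_mod_cast hnd.symm
  have hm : (n : ℚ) / (24 * k - 12) < m + 1 := by
    rw [mul_one_sub, mul_one_div] at hd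
    linarith
  -- `120 k² - 180 k + 60 = 5 (k - 1) (24 k - 12)`
  have hk5 : 5 * ((k : ℚ) - 1) ≤ n / (24 * k - 12) := by
    have : (120 * k ^ 2 + 60 : ℚ) ≤ n + 180 * k := by exact_mod_cast hn
    rw [le_div_iff₀ hc]
    nlinarith
  rw [mul_one_add, mul_one_div] at he
  constructor
  · have : (5 * k : ℚ) < m + 6 := by linarith
    exact_mod_cast Nat.lt_succ_iff.mp (by exact_mod_cast this)
  · have : (e : ℚ) < n + m + 1 := by linarith
    exact Nat.lt_succ_iff.mp (by exact_mod_cast this)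

theorem stmt10_general {V : Type*} [Fintype V] (G : SimpleGraph V) (n k : ℕ)
    (hn : 120 * k ^ 2 + 60 ≤ n + 180 * k) (hcard : Fintype.card V = n) (hconn : G.Connected)
    (he : (G.edgeSet.ncard : ℚ) ≤ (n : ℚ) * (1 + 1 / (24 * (k : ℚ) - 12)))
    (hΔ : ∀ v : V, ((G.neighborSet v).ncard : ℚ) < (n : ℚ) * (1 - 1 / (24 * (k : ℚ) - 12))) :
    k - 1 ≤ alphaPrime G := by
  classical
  obtain hk | hk := le_or_gt k 1
  · simp [Nat.sub_eq_zero_of_le hk]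
  have : Nonempty V := Fintype.card_pos_iff.mp (by nlinarith)
  refine le_csInf ⟨_, Classical.arbitrary V, rfl⟩ ?_
  rintro _ ⟨v, rfl⟩
  have hcardv : G.degree v + 1 + #(G.closedNeighborFinset v)ᶜ = n := by
    rw [← G.card_closedNeighborFinset, card_add_card_compl, hcard]
  have hdeg := hΔ v
  rw [← coe_neighborFinset, Set.ncard_coe_finset, card_neighborFinset_eq_degree] at hdeg
  rw [← coe_edgeFinset, Set.ncard_coe_finset] at he
  obtain ⟨hkm, hem⟩ := five_mul_le_and_le_add_of_degree_bounds hk.le hn hcardv hdeg he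
  have := G.card_compl_closedNeighborFinset_le_five_mul_indepNum hconn.preconnected v (by omega)
  omega

/-- if `Δ(G) < n(1 - 1/(24k-12))` then `α'(G) ≥ k - 1`. -/
theorem stmt10 {V : Type*} [Fintype V] (G : SimpleGraph V) (n k : ℕ) (hk : 1 ≤ k)
    (hn : 120 * k ^ 2 + 60 ≤ n + 180 * k) (hcard : Fintype.card V = n) (hconn : G.Connected)
    (he : (G.edgeSet.ncard : ℚ) ≤ (n : ℚ) * (1 + 1 / (24 * (k : ℚ) - 12)))
    (hΔ : ∀ v : V, ((G.neighborSet v).ncard : ℚ) < (n : ℚ) * (1 - 1 / (24 * (k : ℚ) - 12))) :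
    k - 1 ≤ alphaPrime G :=
  stmt10_general G n k hn hcard hconn he hΔ
end
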